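/- Let z = x + iy be a complex number with y ≠ 0. Then the function S, defined by S(w) = arcsin(β(w)) + i·sign(Im w)·arcosh(α(w)) with α(w) = (|w−1|+|w+1|)/2 and β(w) = (|w+1|−|w−1|)/2, is complex differentiable at z with derivative S′(z) = 1/Y(z), where Y(w) = α(w)·√(1−β(w)²) − i·sign(Im w)·β(w)·√(α(w)²−1). -/

import Mathlib

/-!
Off the real axis `Real.sign w.im` is locally constant, so `S` is continuous at `z`. Writing
`S w = u + v i` with `sin u = β`, `cosh v = α`, the addition formulas together with
`α β = Re w` and `(α² - 1)(1 - β²) = (Im w)²` give `sin (S w) = w` and `cos (S w) = Y w ≠ 0`.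
Thus `S` is a continuous local right inverse of `sin`, and the inverse function theorem gives
`S' z = 1 / sin' (S z) = 1 / Y z`.
-/

open Complex

/-- Real inverse hyperbolic cosine, `arcosh t = ln (t + √(t²-1))`. -/
noncomputable def arcosh (t : ℝ) : ℝ := Real.log (t + Real.sqrt (t ^ 2 - 1))

/-- `α(w) = (|w-1| + |w+1|)/2`. -/
noncomputable def alpha (w : ℂ) : ℝ := (‖w - 1‖ + ‖w + 1‖) / 2

/-- `β(w) = (|w+1| - |w-1|)/2`. -/
noncomputable def beta (w : ℂ) : ℝ := (‖w + 1‖ - ‖w - 1‖) / 2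

/-- Principal branch `S(w)` of the inverse sine. -/
noncomputable def S (w : ℂ) : ℂ :=
  (Real.arcsin (beta w) : ℝ) + Complex.I * (Real.sign w.im : ℝ) * (arcosh (alpha w) : ℝ)

/-- Principal branch `Y(w)` of `√(1-w²)`. -/
noncomputable def Y (w : ℂ) : ℂ :=
  (alpha w * Real.sqrt (1 - (beta w) ^ 2) : ℝ) -
    Complex.I * (Real.sign w.im : ℝ) * (beta w * Real.sqrt ((alpha w) ^ 2 - 1) : ℝ)

open Filter Topology

theorem arcosh_eq_real_arcosh : arcosh = Real.arcosh := rfl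

namespace Real

theorem sign_mul_abs (r : ℝ) : sign r * |r| = r := by
  rcases lt_trichotomy r 0 with hr | rfl | hr
  · rw [sign_of_neg hr, abs_of_neg hr]; ring
  · simp
  · rw [sign_of_pos hr, abs_of_pos hr, one_mul]

theorem sinh_sign_mul (r x : ℝ) : sinh (sign r * x) = sign r * sinh x := by
  rcases sign_apply_eq r with h | h | h <;> simp [h]

theorem cosh_sign_mul {r : ℝ} (hr : r ≠ 0) (x : ℝ) : cosh (sign r * x) = cosh x := by
  rcases sign_apply_eq_of_ne_zero r hr with h | h <;> simp [h]

theorem eventually_sign_eq {r : ℝ} (hr : r ≠ 0) : ∀ᶠ s in 𝓝 r, sign s = sign r := by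
  rcases hr.lt_or_gt with hr | hr
  · filter_upwards [eventually_lt_nhds hr] with s hs
    rw [sign_of_neg hs, sign_of_neg hr]
  · filter_upwards [eventually_gt_nhds hr] with s hs
    rw [sign_of_pos hs, sign_of_pos hr]

end Real

section AlphaBeta

variable (w : ℂ)

theorem norm_add_one_sq : ‖w + 1‖ ^ 2 = (w.re + 1) ^ 2 + w.im ^ 2 := by
  rw [Complex.sq_norm, normSq_apply]
  simp only [add_re, add_im, one_re, one_im]
  ring

theorem norm_sub_one_sq : ‖w - 1‖ ^ 2 = (w.re - 1) ^ 2 + w.im ^ 2 := by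
  rw [Complex.sq_norm, normSq_apply]
  simp only [sub_re, sub_im, one_re, one_im]
  ring

theorem norm_add_one_sub_sub_one : ‖(w + 1) - (w - 1)‖ = 2 := by
  rw [add_sub_sub_cancel, one_add_one_eq_two, Complex.norm_two]

theorem one_le_alpha : 1 ≤ alpha w := by
  have := norm_sub_le (w + 1) (w - 1)
  rw [norm_add_one_sub_sub_one] at this
  unfold alpha
  linarith

theorem abs_beta_le_one : |beta w| ≤ 1 := by
  have := abs_norm_sub_norm_le (w + 1) (w - 1)
  rw [norm_add_one_sub_sub_one] at this
  rw [beta, abs_div, abs_two]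
  linarith

theorem alpha_mul_beta : alpha w * beta w = w.re := by
  have h₁ := norm_add_one_sq w
  have h₂ := norm_sub_one_sq w
  unfold alpha beta
  linear_combination (h₁ - h₂) / 4

theorem alpha_sq_sub_one_mul_one_sub_beta_sq :
    (alpha w ^ 2 - 1) * (1 - beta w ^ 2) = w.im ^ 2 := by
  -- the left side is `α² + β² - 1 - (α β)²`, and `α² + β² = (‖w + 1‖² + ‖w - 1‖²) / 2`
  have h₁ := norm_add_one_sq w
  have h₂ := norm_sub_one_sq w
  unfold alpha beta
  linear_combination (h₁ + h₂) / 2 - (h₁ - h₂) * (‖w + 1‖ ^ 2 - ‖w - 1‖ ^ 2 + 4 * w.re) / 16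

theorem sqrt_one_sub_beta_sq_mul_sqrt_alpha_sq_sub_one :
    √(1 - beta w ^ 2) * √(alpha w ^ 2 - 1) = |w.im| := by
  have : 0 ≤ 1 - beta w ^ 2 := by nlinarith [abs_le.1 (abs_beta_le_one w)]
  rw [← Real.sqrt_mul this, mul_comm, alpha_sq_sub_one_mul_one_sub_beta_sq, Real.sqrt_sq_eq_abs]

theorem continuous_alpha : Continuous alpha := by
  unfold alpha
  fun_prop

theorem continuous_beta : Continuous beta := by
  unfold beta
  fun_prop

end AlphaBeta

theorem beta_sq_lt_one {w : ℂ} (hw : w.im ≠ 0) : beta w ^ 2 < 1 := by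
  have hprod : 0 < (alpha w ^ 2 - 1) * (1 - beta w ^ 2) := by
    rw [alpha_sq_sub_one_mul_one_sub_beta_sq]
    positivity
  have hα : 0 ≤ alpha w ^ 2 - 1 := by nlinarith [one_le_alpha w]
  linarith [pos_of_mul_pos_right hprod hα]

theorem S_eq (w : ℂ) :
    S w = (Real.arcsin (beta w) : ℂ) +
      ((Real.sign w.im * Real.arcosh (alpha w) : ℝ) : ℂ) * I := by
  rw [S, ← arcosh_eq_real_arcosh]
  push_cast
  ring

theorem sin_S {w : ℂ} (hw : w.im ≠ 0) : sin (S w) = w := by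
  have hβ := abs_le.1 (abs_beta_le_one w)
  rw [S_eq, sin_add, sin_mul_I, cos_mul_I, ← ofReal_sin, ← ofReal_cos, ← ofReal_sinh,
    ← ofReal_cosh, Real.sin_arcsin hβ.1 hβ.2, Real.cos_arcsin, Real.cosh_sign_mul hw,
    Real.sinh_sign_mul, Real.cosh_arcosh (one_le_alpha w), Real.sinh_arcosh (one_le_alpha w)]
  apply Complex.ext
  · simp [mul_comm, alpha_mul_beta]
  · simp [mul_left_comm _ (Real.sign w.im), sqrt_one_sub_beta_sq_mul_sqrt_alpha_sq_sub_one,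
      Real.sign_mul_abs]

theorem cos_S {w : ℂ} (hw : w.im ≠ 0) : cos (S w) = Y w := by
  have hβ := abs_le.1 (abs_beta_le_one w)
  rw [S_eq, cos_add, sin_mul_I, cos_mul_I, ← ofReal_sin, ← ofReal_cos, ← ofReal_sinh,
    ← ofReal_cosh, Real.sin_arcsin hβ.1 hβ.2, Real.cos_arcsin, Real.cosh_sign_mul hw,
    Real.sinh_sign_mul, Real.cosh_arcosh (one_le_alpha w), Real.sinh_arcosh (one_le_alpha w), Y]
  push_cast
  ring

theorem Y_ne_zero {w : ℂ} (hw : w.im ≠ 0) : Y w ≠ 0 := by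
  have hre : (Y w).re = alpha w * √(1 - beta w ^ 2) := by simp [Y]
  have hpos : 0 < (Y w).re := by
    rw [hre]
    exact mul_pos (by linarith [one_le_alpha w])
      (Real.sqrt_pos.2 (by linarith [beta_sq_lt_one hw]))
  exact fun h => hpos.ne' (by rw [h, zero_re])

theorem continuousAt_S {w : ℂ} (hw : w.im ≠ 0) : ContinuousAt S w := by
  have hS : S =ᶠ[𝓝 w] fun v => (Real.arcsin (beta v) : ℂ) +
      I * (Real.sign w.im : ℝ) * (Real.arcosh (alpha v) : ℝ) := by
    filter_upwards [continuous_im.continuousAt.eventually (Real.eventually_sign_eq hw)] with v hv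
    rw [S, hv, arcosh_eq_real_arcosh]
  refine ContinuousAt.congr ?_ hS.symm
  have : Continuous fun v => Real.arcosh (alpha v) :=
    Real.continuousOn_arcosh.comp_continuous continuous_alpha one_le_alpha
  have := Real.continuous_arcsin.comp continuous_beta
  exact Continuous.continuousAt (by fun_prop)

theorem stmt10 (z : ℂ) (h : z.im ≠ 0) : HasDerivAt S (1 / Y z) z := by
  have hsin : HasDerivAt sin (Y z) (S z) := cos_S h ▸ hasDerivAt_sin (S z)
  have hinv : ∀ᶠ w in 𝓝 z, sin (S w) = w :=
    (continuous_im.continuousAt.eventually_ne h).mono fun w hw => sin_S hw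
  simpa only [one_div] using hsin.of_local_left_inverse (continuousAt_S h) (Y_ne_zero h) hinv
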